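/- arXiv:1905.06787 — 5 statements merged into one kernel-verified Lean document; each statement's English description precedes it below -/
import Mathlib

section
/- In the setting of a splitting ℝⁿ = E_y ⊕ F_y over a compact set K with E_y ⊂ Int C ∪ {0} and F_y ∩ C = {0}, let δ' > 0 be such that {v : dist(v, E_y ∩ S) ≤ δ'} ⊂ Int C for all y ∈ K, and set C₁ = 2/δ'. Then for any nonzero v ∈ ℝⁿ and any y ∈ K, if ‖P_y v‖ ≥ C₁ ‖Q_y v‖ (where P_y, Q_y are the projections onto E_y, F_y respectively), then v ∈ Int C. -/
open Filter Topology Metric Pointwise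

/-- Cone criterion via projections: in the splitting `ℝⁿ = E_y ⊕ F_y` over a compact `K`
with `E_y ⊆ Int C ∪ {0}` and `F_y ∩ C = {0}`, if `δ' > 0` is such that
`{v : dist(v, E_y ∩ S) ≤ δ'} ⊆ Int C` for all `y ∈ K` and `C₁ = 2/δ'`, then any nonzero `v`
with `‖P_y v‖ ≥ C₁ ‖Q_y v‖` for some `y ∈ K` lies in `Int C`. -/
theorem stmt7 {n k : ℕ} (K C : Set (EuclideanSpace ℝ (Fin n)))
    (hK : IsCompact K) (hC : IsClosed C)
    (hcone : ∀ v ∈ C, ∀ l : ℝ, l • v ∈ C)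
    (hint : (interior C).Nonempty)
    (E F : EuclideanSpace ℝ (Fin n) → Submodule ℝ (EuclideanSpace ℝ (Fin n)))
    (hdimE : ∀ y ∈ K, Module.finrank ℝ (E y) = k)
    (hdimF : ∀ y ∈ K, Module.finrank ℝ (F y) = n - k)
    (hEC : ∀ y ∈ K, (E y : Set (EuclideanSpace ℝ (Fin n))) ⊆ interior C ∪ {0})
    (hFC : ∀ y ∈ K, (F y : Set (EuclideanSpace ℝ (Fin n))) ∩ C = {0})
    (hcompl : ∀ y ∈ K, IsCompl (E y) (F y))
    (P Q : EuclideanSpace ℝ (Fin n) → EuclideanSpace ℝ (Fin n) →L[ℝ] EuclideanSpace ℝ (Fin n))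
    (hPQ : ∀ y ∈ K, ∀ v : EuclideanSpace ℝ (Fin n),
        P y v ∈ E y ∧ Q y v ∈ F y ∧ P y v + Q y v = v)
    (δ' : ℝ) (hδ' : 0 < δ')
    (hball : ∀ y ∈ K, ∀ v : EuclideanSpace ℝ (Fin n),
        infDist v {w | w ∈ E y ∧ ‖w‖ = 1} ≤ δ' → v ∈ interior C) :
    ∀ v : EuclideanSpace ℝ (Fin n), v ≠ 0 → ∀ y ∈ K,
      ‖P y v‖ ≥ (2 / δ') * ‖Q y v‖ → v ∈ interior C := by
  intro v hv y hy h
  obtain ⟨hPE, hQF, hsum⟩ := hPQ y hy v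
  have hp : P y v ≠ 0 := by
    intro h0
    apply hv
    rw [h0, norm_zero] at h
    have h2δ : (0:ℝ) < 2 / δ' := by positivity
    have hq : Q y v = 0 := by
      have h1 : (2 / δ') * ‖Q y v‖ ≤ (2 / δ') * 0 := by simpa using h
      have := le_of_mul_le_mul_left h1 h2δ
      simpa using le_antisymm this (norm_nonneg _)
    rw [← hsum, h0, hq, add_zero]
  set c := ‖P y v‖ with hc
  have hcpos : 0 < c := norm_pos_iff.mpr hp
  have hw : (c⁻¹ • v) ∈ interior C := by
    apply hball y hy
    have hmem : (c⁻¹ • P y v) ∈ {w | w ∈ E y ∧ ‖w‖ = 1} := by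
      refine ⟨Submodule.smul_mem _ _ hPE, ?_⟩
      rw [norm_smul, norm_inv, Real.norm_eq_abs, abs_of_pos hcpos, ← hc,
        inv_mul_cancel₀ hcpos.ne']
    have h2 : 2 * ‖Q y v‖ ≤ c * δ' := by
      rw [ge_iff_le, div_mul_eq_mul_div, div_le_iff₀ hδ'] at h
      linarith
    calc infDist (c⁻¹ • v) {w | w ∈ E y ∧ ‖w‖ = 1}
        ≤ dist (c⁻¹ • v) (c⁻¹ • P y v) := infDist_le_dist_of_mem hmem
      _ = c⁻¹ * ‖Q y v‖ := by
          rw [dist_eq_norm, ← smul_sub, norm_smul, norm_inv, Real.norm_eq_abs,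
            abs_of_pos hcpos]
          rw [← eq_sub_of_add_eq' hsum]
      _ ≤ δ' := by
          rw [inv_mul_le_iff₀ hcpos]
          nlinarith [norm_nonneg (Q y v)]
  have hsub : c • C ⊆ C := by
    rintro x ⟨u, hu, rfl⟩
    exact hcone u hu c
  have hmem2 : c • (c⁻¹ • v) ∈ c • interior C := Set.smul_mem_smul_set hw
  rw [← interior_smul₀ hcpos.ne'] at hmem2
  have := interior_mono hsub hmem2
  rwa [smul_inv_smul₀ hcpos.ne'] at this
end

section
/- In the setting of a splitting ℝⁿ = E_y ⊕ F_y over a compact set K with F_y ∩ C = {0}, let δ'' > 0 be such that dist(v, C) > δ'' for all v ∈ ⋃_{y∈K}(F_y ∩ S), and set δ₃ = 1/δ''. Then for every v ∈ C \ {0} and every y ∈ K, ‖Q_y v‖ ≤ δ₃ ‖P_y v‖, where P_y, Q_y are the projections onto E_y, F_y respectively. -/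
open Filter Topology Metric

/-- Projection comparison on the cone: in the splitting `ℝⁿ = E_y ⊕ F_y` over a compact `K`
with `F_y ∩ C = {0}`, if `δ'' > 0` satisfies `dist(v, C) > δ''` for all unit `v ∈ F_y`,
`y ∈ K`, and `δ₃ = 1/δ''`, then `‖Q_y v‖ ≤ δ₃ ‖P_y v‖` for every `v ∈ C \ {0}` and `y ∈ K`. -/
theorem stmt8 {n k : ℕ} (K C : Set (EuclideanSpace ℝ (Fin n)))
    (hK : IsCompact K) (hC : IsClosed C)
    (hcone : ∀ v ∈ C, ∀ l : ℝ, l • v ∈ C)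
    (E F : EuclideanSpace ℝ (Fin n) → Submodule ℝ (EuclideanSpace ℝ (Fin n)))
    (hFC : ∀ y ∈ K, (F y : Set (EuclideanSpace ℝ (Fin n))) ∩ C = {0})
    (hcompl : ∀ y ∈ K, IsCompl (E y) (F y))
    (P Q : EuclideanSpace ℝ (Fin n) → EuclideanSpace ℝ (Fin n) →L[ℝ] EuclideanSpace ℝ (Fin n))
    (hPQ : ∀ y ∈ K, ∀ v : EuclideanSpace ℝ (Fin n),
        P y v ∈ E y ∧ Q y v ∈ F y ∧ P y v + Q y v = v)
    (δ'' : ℝ) (hδ'' : 0 < δ'')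
    (hdist : ∀ y ∈ K, ∀ v : EuclideanSpace ℝ (Fin n),
        v ∈ F y → ‖v‖ = 1 → δ'' < infDist v C) :
    ∀ v ∈ C, v ≠ 0 → ∀ y ∈ K, ‖Q y v‖ ≤ (1 / δ'') * ‖P y v‖ := by
  intro v hv hv0 y hy
  obtain ⟨hPv, hQv, hsum⟩ := hPQ y hy v
  by_cases hQ0 : Q y v = 0
  · rw [hQ0, norm_zero]
    positivity
  · have hQn : (0:ℝ) < ‖Q y v‖ := norm_pos_iff.mpr hQ0
    set u := (‖Q y v‖)⁻¹ • Q y v with hu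
    have huF : u ∈ F y := Submodule.smul_mem _ _ hQv
    have hun : ‖u‖ = 1 := by
      rw [hu, norm_smul, norm_inv, norm_norm, inv_mul_cancel₀ hQn.ne']
    have hlt : δ'' < infDist u C := hdist y hy u huF hun
    have hcmem : (‖Q y v‖)⁻¹ • v ∈ C := hcone v hv _
    have hle : infDist u C ≤ ‖u - (‖Q y v‖)⁻¹ • v‖ := by
      simpa [dist_eq_norm] using infDist_le_dist_of_mem hcmem
    have hPe : P y v = v - Q y v := eq_sub_of_add_eq hsum
    have hdiff : u - (‖Q y v‖)⁻¹ • v = -((‖Q y v‖)⁻¹ • P y v) := by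
      rw [hu, ← smul_sub, hPe]
      module
    have hkey : δ'' < (‖Q y v‖)⁻¹ * ‖P y v‖ := by
      have := hlt.trans_le hle
      rwa [hdiff, norm_neg, norm_smul, norm_inv, norm_norm] at this
    rw [div_mul_eq_mul_div, le_div_iff₀ hδ'', one_mul, mul_comm]
    have := (mul_lt_mul_of_pos_left hkey hQn).le
    rw [mul_inv_cancel_left₀ hQn.ne'] at this
    linarith [this]
end

section
/- Let Φ_t be a flow on ℝⁿ strongly monotone with respect to a solid cone C (if x − y ∈ C then Φ_t x − Φ_t y ∈ C for t ≥ 0, and if additionally x ≠ y then Φ_t x − Φ_t y ∈ Int C for t > 0). Then the set Q = {x ∈ ℝⁿ : there exist t₁ ≠ t₂ ≥ 0 with Φ_{t₁}x ≠ Φ_{t₂}x and Φ_{t₁}x − Φ_{t₂}x ∈ C} of points with pseudo-ordered orbits is open in ℝⁿ. -/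
open Filter Topology Metric

/-- For a continuous flow `Φ` on `ℝⁿ` strongly monotone with respect to a solid cone `C`,
the set `Q` of points with pseudo-ordered orbits is open. -/
theorem stmt11 {n : ℕ} (C : Set (EuclideanSpace ℝ (Fin n)))
    (hC : IsClosed C)
    (hcone : ∀ v ∈ C, ∀ l : ℝ, l • v ∈ C)
    (hint : (interior C).Nonempty)
    (Φ : ℝ → EuclideanSpace ℝ (Fin n) → EuclideanSpace ℝ (Fin n))
    (hΦcont : Continuous fun p : ℝ × EuclideanSpace ℝ (Fin n) => Φ p.1 p.2)
    (hΦ0 : ∀ x, Φ 0 x = x)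
    (hΦadd : ∀ s t x, Φ (s + t) x = Φ t (Φ s x))
    (hmono : ∀ x y, x - y ∈ C → ∀ t : ℝ, 0 ≤ t → Φ t x - Φ t y ∈ C)
    (hstrong : ∀ x y, x - y ∈ C → x ≠ y → ∀ t : ℝ, 0 < t → Φ t x - Φ t y ∈ interior C) :
    IsOpen {x : EuclideanSpace ℝ (Fin n) | ∃ t₁ ≥ (0 : ℝ), ∃ t₂ ≥ (0 : ℝ),
      Φ t₁ x ≠ Φ t₂ x ∧ Φ t₁ x - Φ t₂ x ∈ C} := by
  have hcontt : ∀ s : ℝ, Continuous fun y => Φ s y := fun s =>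
    hΦcont.comp (continuous_const.prodMk continuous_id)
  rw [isOpen_iff_mem_nhds]
  rintro x ⟨t₁, ht₁, t₂, ht₂, hne, hmem⟩
  by_cases h0 : (0 : EuclideanSpace ℝ (Fin n)) ∈ interior C
  · -- then C = univ
    have hCuniv : C = Set.univ := by
      rcases Metric.isOpen_iff.1 isOpen_interior 0 h0 with ⟨ε, hε, hball⟩
      ext v
      simp only [Set.mem_univ, iff_true]
      by_cases hv : v = 0
      · subst hv; exact interior_subset h0
      · have hnv : 0 < ‖v‖ := norm_pos_iff.2 hv
        have hmemb : (ε / (2 * ‖v‖)) • v ∈ C := by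
          apply interior_subset (hball ?_)
          simp only [mem_ball, dist_zero_right, norm_smul, Real.norm_eq_abs]
          rw [abs_of_pos (by positivity)]
          rw [div_mul_eq_mul_div, div_lt_iff₀ (by positivity)]
          nlinarith
        have := hcone _ hmemb ((2 * ‖v‖) / ε)
        rwa [smul_smul, div_mul_div_comm, mul_comm, div_self (by positivity), one_smul] at this
    have : {y | Φ t₁ y ≠ Φ t₂ y} ∈ nhds x := by
      have hopen : IsOpen {y | Φ t₁ y ≠ Φ t₂ y} :=
        isOpen_ne_fun (hcontt t₁) (hcontt t₂)
      exact hopen.mem_nhds hne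
    filter_upwards [this] with y hy
    exact ⟨t₁, ht₁, t₂, ht₂, hy, by rw [hCuniv]; trivial⟩
  · -- strong monotonicity step
    have hxint : Φ (t₁ + 1) x - Φ (t₂ + 1) x ∈ interior C := by
      rw [hΦadd, hΦadd]
      exact hstrong _ _ hmem hne 1 one_pos
    have hopen : IsOpen {y | Φ (t₁ + 1) y - Φ (t₂ + 1) y ∈ interior C} :=
      isOpen_interior.preimage ((hcontt (t₁ + 1)).sub (hcontt (t₂ + 1)))
    filter_upwards [hopen.mem_nhds hxint] with y hy
    refine ⟨t₁ + 1, by linarith, t₂ + 1, by linarith, ?_, interior_subset hy⟩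
    intro heq
    apply h0
    rwa [heq, sub_self] at hy
end

section
/- Let Φ_t be a flow on ℝⁿ strongly monotone with respect to a solid cone C. Suppose x₁ ∼ x₂ (i.e., x₁ − x₂ ∈ C) with x₁ ≠ x₂, and there is a sequence t_k → ∞ such that Φ_{t_k}(x₁) → z and Φ_{t_k}(x₂) → z for the same point z. Then z is either an equilibrium or z ∈ Q, i.e., the orbit of z is pseudo-ordered. -/
open Filter Topology Metric

/-- Co-limit lemma: if `Φ` is strongly monotone with respect to a solid cone `C`,
`x₁ ∼ x₂` with `x₁ ≠ x₂`, and `Φ_{t_k}(x₁) → z`, `Φ_{t_k}(x₂) → z` along a sequence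
`t_k → ∞`, then `z` is an equilibrium or the orbit of `z` is pseudo-ordered. -/
theorem stmt12 {n : ℕ} (C : Set (EuclideanSpace ℝ (Fin n)))
    (hC : IsClosed C)
    (hcone : ∀ v ∈ C, ∀ l : ℝ, l • v ∈ C)
    (hint : (interior C).Nonempty)
    (Φ : ℝ → EuclideanSpace ℝ (Fin n) → EuclideanSpace ℝ (Fin n))
    (hΦcont : Continuous fun p : ℝ × EuclideanSpace ℝ (Fin n) => Φ p.1 p.2)
    (hΦ0 : ∀ x, Φ 0 x = x)
    (hΦadd : ∀ s t x, Φ (s + t) x = Φ t (Φ s x))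
    (hmono : ∀ x y, x - y ∈ C → ∀ t : ℝ, 0 ≤ t → Φ t x - Φ t y ∈ C)
    (hstrong : ∀ x y, x - y ∈ C → x ≠ y → ∀ t : ℝ, 0 < t → Φ t x - Φ t y ∈ interior C)
    (x₁ x₂ z : EuclideanSpace ℝ (Fin n))
    (hord : x₁ - x₂ ∈ C) (hne : x₁ ≠ x₂)
    (t : ℕ → ℝ) (ht : Tendsto t atTop atTop)
    (h1 : Tendsto (fun k => Φ (t k) x₁) atTop (nhds z))
    (h2 : Tendsto (fun k => Φ (t k) x₂) atTop (nhds z)) :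
    (∀ s : ℝ, Φ s z = z) ∨
      (∃ t₁ ≥ (0 : ℝ), ∃ t₂ ≥ (0 : ℝ),
        Φ t₁ z ≠ Φ t₂ z ∧ Φ t₁ z - Φ t₂ z ∈ C) := by
  -- pick an index with positive time
  obtain ⟨m₀, hm₀⟩ := (ht.eventually_ge_atTop 1).exists
  have htm₀ : (0 : ℝ) < t m₀ := lt_of_lt_of_le one_pos hm₀
  set a := Φ (t m₀) x₁ with ha
  set b := Φ (t m₀) x₂ with hb
  have hab : a - b ∈ interior C := hstrong x₁ x₂ hord hne (t m₀) htm₀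
  -- continuity of σ ↦ Φ σ a - b at 0
  have hca : Continuous fun σ : ℝ => Φ σ a - b :=
    (hΦcont.comp (continuous_id.prodMk continuous_const)).sub continuous_const
  have h0mem : (fun σ : ℝ => Φ σ a - b) 0 ∈ interior C := by simpa [hΦ0] using hab
  have hnhds : (fun σ : ℝ => Φ σ a - b) ⁻¹' interior C ∈ nhds (0 : ℝ) :=
    hca.continuousAt.preimage_mem_nhds (isOpen_interior.mem_nhds h0mem)
  obtain ⟨ε, hε, hball⟩ := Metric.mem_nhds_iff.mp hnhds
  have hε2 : (0 : ℝ) < ε / 2 := by linarith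
  have hmemC : ∀ σ : ℝ, 0 ≤ σ → σ ≤ ε / 2 → Φ σ a - b ∈ C := by
    intro σ hσ0 hσε
    have hball' : σ ∈ Metric.ball (0 : ℝ) ε := by
      rw [Metric.mem_ball, Real.dist_eq, sub_zero, abs_of_nonneg hσ0]
      linarith
    exact interior_subset (hball hball')
  -- key lemma: an ordered pair (Φ σ a, b) yields Φ σ z - z ∈ C in the limit
  have key : ∀ σ : ℝ, Φ σ a - b ∈ C → Φ σ z - z ∈ C := by
    intro σ hσ
    have hcΦσ : Continuous (Φ σ) := hΦcont.comp (continuous_const.prodMk continuous_id)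
    have htd : Tendsto (fun k => Φ σ (Φ (t k) x₁) - Φ (t k) x₂) atTop (nhds (Φ σ z - z)) :=
      ((hcΦσ.tendsto z).comp h1).sub h2
    refine hC.mem_of_tendsto htd ?_
    filter_upwards [ht.eventually_ge_atTop (t m₀)] with k hk
    have h := hmono (Φ σ a) b hσ (t k - t m₀) (by linarith)
    have e1 : Φ (t k - t m₀) (Φ σ a) = Φ σ (Φ (t k) x₁) := by
      rw [ha, ← hΦadd (t m₀) σ x₁, ← hΦadd (t m₀ + σ) (t k - t m₀) x₁,
        ← hΦadd (t k) σ x₁, show t m₀ + σ + (t k - t m₀) = t k + σ by ring]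
    have e2 : Φ (t k - t m₀) b = Φ (t k) x₂ := by
      rw [hb, ← hΦadd (t m₀) (t k - t m₀) x₂, show t m₀ + (t k - t m₀) = t k by ring]
    rwa [e1, e2] at h
  by_cases hcase : ∀ σ : ℝ, 0 < σ → σ ≤ ε / 2 → Φ σ z = z
  · -- z is an equilibrium
    left
    have hpos : ∀ s : ℝ, 0 ≤ s → Φ s z = z := by
      intro s hs
      rcases eq_or_lt_of_le hs with h | h
      · rw [← h, hΦ0]
      · set N : ℕ := ⌈s / (ε / 2)⌉₊ with hN
        have hN0 : 0 < N := Nat.ceil_pos.mpr (div_pos h hε2)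
        have hNR : (0 : ℝ) < N := by exact_mod_cast hN0
        have hsn : 0 < s / N := div_pos h hNR
        have hsε : s / N ≤ ε / 2 := by
          rw [div_le_iff₀ hNR]
          have hle := Nat.le_ceil (s / (ε / 2))
          rw [div_le_iff₀ hε2] at hle
          calc s ≤ (⌈s / (ε / 2)⌉₊ : ℝ) * (ε / 2) := hle
            _ = ε / 2 * N := by rw [hN]; ring
        have hstep : Φ (s / N) z = z := hcase _ hsn hsε
        have hiter : ∀ k : ℕ, Φ ((k : ℝ) * (s / N)) z = z := by
          intro k
          induction k with
          | zero => simpa using hΦ0 z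
          | succ k ih =>
            have hk : ((k + 1 : ℕ) : ℝ) * (s / N) = (k : ℝ) * (s / N) + s / N := by
              push_cast; ring
            rw [hk, hΦadd, ih, hstep]
        have hfin := hiter N
        rwa [mul_comm, div_mul_cancel₀ s (ne_of_gt hNR)] at hfin
    intro s
    rcases le_or_gt 0 s with hs | hs
    · exact hpos s hs
    · have h₁ : Φ (-s) z = z := hpos (-s) (by linarith)
      have h2' := hΦadd (-s) s z
      rw [show -s + s = 0 by ring, hΦ0, h₁] at h2'
      exact h2'.symm
  · -- the orbit of z is pseudo-ordered
    right
    push_neg at hcase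
    obtain ⟨σ, hσ0, hσε, hσne⟩ := hcase
    refine ⟨σ, le_of_lt hσ0, 0, le_refl 0, ?_, ?_⟩
    · rw [hΦ0]; exact hσne
    · rw [hΦ0]; exact key σ (hmemC σ (le_of_lt hσ0) hσε)
end

section
/- Let Φ_t be a continuous flow on ℝⁿ and x a point with bounded orbit. Suppose there exist τ₁ < τ₂ with Φ_{τ₁}x ≠ Φ_{τ₂}x such that ‖Φ_{τ₁+t}(x) − Φ_{τ₂+t}(x)‖ → 0 as t → +∞. Then every point u of the omega-limit set ω(x) is periodic with period τ₂ − τ₁, i.e., Φ_{τ₂−τ₁}(u) = u. -/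
open Filter Topology Metric Bornology

/-- If `Φ` is a continuous flow on `ℝⁿ`, `x` has bounded orbit, and there are `τ₁ < τ₂` with
`Φ_{τ₁}x ≠ Φ_{τ₂}x` and `‖Φ_{τ₁+t}(x) - Φ_{τ₂+t}(x)‖ → 0` as `t → ∞`, then every point of
`ω(x)` is periodic with period `τ₂ - τ₁`. -/
theorem stmt13 {n : ℕ}
    (Φ : ℝ → EuclideanSpace ℝ (Fin n) → EuclideanSpace ℝ (Fin n))
    (hΦcont : Continuous fun p : ℝ × EuclideanSpace ℝ (Fin n) => Φ p.1 p.2)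
    (hΦ0 : ∀ x, Φ 0 x = x)
    (hΦadd : ∀ s t x, Φ (s + t) x = Φ t (Φ s x))
    (x : EuclideanSpace ℝ (Fin n))
    (hbdd : IsBounded {p | ∃ t ≥ (0 : ℝ), p = Φ t x})
    (τ₁ τ₂ : ℝ) (hτ : τ₁ < τ₂) (hne : Φ τ₁ x ≠ Φ τ₂ x)
    (hconv : Tendsto (fun t : ℝ => ‖Φ (τ₁ + t) x - Φ (τ₂ + t) x‖) atTop (nhds 0)) :
    ∀ u : EuclideanSpace ℝ (Fin n),
      (∃ s : ℕ → ℝ, Tendsto s atTop atTop ∧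
        Tendsto (fun k => Φ (s k) x) atTop (nhds u)) →
      Φ (τ₂ - τ₁) u = u := by
  rintro u ⟨s, hs, hsu⟩
  set d := τ₂ - τ₁ with hd
  -- limit of Φ (s k + d) x is Φ d u
  have h1 : Tendsto (fun k => Φ (s k + d) x) atTop (nhds (Φ d u)) := by
    have : Tendsto (fun k => Φ d (Φ (s k) x)) atTop (nhds (Φ d u)) := by
      have := hΦcont.tendsto (d, u)
      exact this.comp (Tendsto.prodMk_nhds tendsto_const_nhds hsu)
    simpa [hΦadd] using this
  -- ‖Φ (s k) x - Φ (s k + d) x‖ → 0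
  have h2 : Tendsto (fun k => Φ (s k) x - Φ (s k + d) x) atTop (nhds 0) := by
    have h3 : Tendsto (fun k => ‖Φ (τ₁ + (s k - τ₁)) x - Φ (τ₂ + (s k - τ₁)) x‖)
        atTop (nhds 0) := hconv.comp (tendsto_atTop_add_const_right atTop (-τ₁) hs)
    have heq : (fun k => ‖Φ (τ₁ + (s k - τ₁)) x - Φ (τ₂ + (s k - τ₁)) x‖)
        = fun k => ‖Φ (s k) x - Φ (s k + d) x‖ := by
      funext k
      have e1 : τ₁ + (s k - τ₁) = s k := by ring
      have e2 : τ₂ + (s k - τ₁) = s k + d := by rw [hd]; ring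
      rw [e1, e2]
    rw [heq] at h3
    exact tendsto_zero_iff_norm_tendsto_zero.mpr h3
  -- hence Φ (s k + d) x → u as well
  have h4 : Tendsto (fun k => Φ (s k + d) x) atTop (nhds u) := by
    have := hsu.sub h2
    simpa using this
  exact tendsto_nhds_unique h1 h4
end
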